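/- Let Ω be a finite set, and let A, B ⊆ Ω be subsets with Ω = A ∪ B, A ∩ B = {ω} for some ω ∈ Ω, and |A| ≥ 3. Let G be a subgroup of Alt(Ω) that fixes at least two elements of A \ {ω} pointwise and acts transitively on B. Then the subgroup of Alt(Ω) generated by the G-conjugates of Alt(A) (the pointwise stabilizer of Ω \ A inside Alt(Ω)) equals Alt(Ω). -/
import Mathlib

open Equiv Equiv.Perm Subgroup

private def c3 {Ω : Type} [DecidableEq Ω] (a b c : Ω) : Equiv.Perm Ω :=
  Equiv.swap a b * Equiv.swap b c

section c3lemmas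
variable {Ω : Type} [DecidableEq Ω] (a b c x : Ω)

private lemma c3_fst (hab : a ≠ b) (hac : a ≠ c) : c3 a b c a = b := by
  simp [c3, Equiv.swap_apply_of_ne_of_ne hab hac]

private lemma c3_snd (hca : c ≠ a) (hcb : c ≠ b) : c3 a b c b = c := by
  simp [c3, Equiv.swap_apply_of_ne_of_ne hca hcb]

private lemma c3_trd : c3 a b c c = a := by simp [c3]

private lemma c3_other (hxa : x ≠ a) (hxb : x ≠ b) (hxc : x ≠ c) : c3 a b c x = x := by
  simp [c3, Equiv.swap_apply_of_ne_of_ne hxb hxc, Equiv.swap_apply_of_ne_of_ne hxa hxb]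

private lemma c3_inv : (c3 a b c)⁻¹ = c3 c b a := by
  simp [c3, mul_inv_rev, Equiv.swap_comm a b, Equiv.swap_comm b c]

private lemma c3_rot (hab : a ≠ b) (hbc : b ≠ c) (hca : c ≠ a) :
    c3 a b c = c3 b c a := by
  ext x
  by_cases hxa : x = a
  · rw [hxa, c3_fst _ _ _ hab (Ne.symm hca), c3_trd]
  by_cases hxb : x = b
  · rw [hxb, c3_snd _ _ _ hca (Ne.symm hbc), c3_fst _ _ _ hbc (Ne.symm hab)]
  by_cases hxc : x = c
  · rw [hxc, c3_trd, c3_snd _ _ _ hab (Ne.symm hca)]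
  · rw [c3_other _ _ _ _ hxa hxb hxc, c3_other _ _ _ _ hxb hxc hxa]

private lemma c3_conj (f : Equiv.Perm Ω) :
    f * c3 a b c * f⁻¹ = c3 (f a) (f b) (f c) := by
  simp only [c3, Equiv.swap_apply_apply]
  group

private lemma c3_mem_alt [Fintype Ω] (hab : a ≠ b) (hbc : b ≠ c) :
    c3 a b c ∈ alternatingGroup Ω := by
  rw [Equiv.Perm.mem_alternatingGroup, c3, map_mul, Equiv.Perm.sign_swap hab,
    Equiv.Perm.sign_swap hbc]
  decide

private lemma isThreeCycle_decomp [Fintype Ω] {σ : Equiv.Perm Ω} (h : σ.IsThreeCycle) :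
    ∃ a b c, a ≠ b ∧ b ≠ c ∧ c ≠ a ∧ σ = c3 a b c := by
  have hcard := h.card_support
  have hne : σ.support.Nonempty := by
    rw [← Finset.card_pos, hcard]; norm_num
  obtain ⟨a, ha⟩ := hne
  refine ⟨a, σ a, σ (σ a), ?_, ?_, ?_, ?_⟩ <;> try skip
  · exact (Equiv.Perm.mem_support.mp ha).symm
  · exact (Equiv.Perm.mem_support.mp (Equiv.Perm.apply_mem_support.mpr ha)).symm
  · intro hca
    have h3 : σ ^ 3 = 1 := by
      rw [← h.orderOf]; exact pow_orderOf_eq_one σ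
    have : σ (σ (σ a)) = a := by
      have := congrArg (fun f : Equiv.Perm Ω => f a) h3
      simpa [pow_succ, Equiv.Perm.mul_apply] using this
    rw [hca] at this
    exact (Equiv.Perm.mem_support.mp ha) this
  · have hab : a ≠ σ a := (Equiv.Perm.mem_support.mp ha).symm
    have hbc : σ a ≠ σ (σ a) :=
      (Equiv.Perm.mem_support.mp (Equiv.Perm.apply_mem_support.mpr ha)).symm
    have hca : σ (σ a) ≠ a := by
      intro hca
      have h3 : σ ^ 3 = 1 := by rw [← h.orderOf]; exact pow_orderOf_eq_one σ
      have : σ (σ (σ a)) = a := by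
        have := congrArg (fun f : Equiv.Perm Ω => f a) h3
        simpa [pow_succ, Equiv.Perm.mul_apply] using this
      rw [hca] at this
      exact (Equiv.Perm.mem_support.mp ha) this
    have hsupp : ({a, σ a, σ (σ a)} : Finset Ω) = σ.support := by
      apply Finset.eq_of_subset_of_card_le
      · intro x hx
        simp only [Finset.mem_insert, Finset.mem_singleton] at hx
        rcases hx with rfl | rfl | rfl
        · exact ha
        · exact Equiv.Perm.apply_mem_support.mpr ha
        · exact Equiv.Perm.apply_mem_support.mpr (Equiv.Perm.apply_mem_support.mpr ha)
      · rw [hcard, Finset.card_insert_of_notMem (by simp [hab, Ne.symm hca]),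
          Finset.card_insert_of_notMem (by simp [hbc]), Finset.card_singleton]
    ext x
    by_cases hxa : x = a
    · subst hxa; rw [c3_fst _ _ _ hab (Ne.symm hca)]
    by_cases hxb : x = σ a
    · subst hxb; rw [c3_snd _ _ _ hca (Ne.symm hbc)]
    by_cases hxc : x = σ (σ a)
    · subst hxc
      have h3 : σ ^ 3 = 1 := by rw [← h.orderOf]; exact pow_orderOf_eq_one σ
      have : σ (σ (σ a)) = a := by
        have := congrArg (fun f : Equiv.Perm Ω => f a) h3
        simpa [pow_succ, Equiv.Perm.mul_apply] using this
      rw [c3_trd, this]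
    · rw [c3_other _ _ _ _ hxa hxb hxc]
      have : x ∉ σ.support := by rw [← hsupp]; simp [hxa, hxb, hxc]
      exact Equiv.Perm.notMem_support.mp this

end c3lemmas

/-- Lemma 3.2: if `Ω = A ∪ B`, `A ∩ B = {ω}`, `|A| ≥ 3`, and `G ≤ Alt(Ω)` fixes two
elements of `A \ {ω}` pointwise and acts transitively on `B`, then the subgroup
generated by the `G`-conjugates of `Alt(A)` equals `Alt(Ω)`. -/
theorem stmt0 {Ω : Type} [Fintype Ω] [DecidableEq Ω]
    (A B : Set Ω) (ω : Ω)
    (hU : A ∪ B = Set.univ) (hI : A ∩ B = {ω}) (hcard : 3 ≤ A.ncard)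
    (G : Subgroup (Equiv.Perm Ω)) (hG : G ≤ alternatingGroup Ω)
    (p q : Ω) (hp : p ∈ A \ {ω}) (hq : q ∈ A \ {ω}) (hpq : p ≠ q)
    (hfix : ∀ g ∈ G, g p = p ∧ g q = q)
    (htrans : ∀ x ∈ B, ∀ y ∈ B, ∃ g ∈ G, g x = y) :
    Subgroup.closure {k : Equiv.Perm Ω | ∃ g ∈ G, ∃ a ∈ alternatingGroup Ω,
        (∀ x ∉ A, a x = x) ∧ k = g⁻¹ * a * g} = alternatingGroup Ω := by
  set H := Subgroup.closure {k : Equiv.Perm Ω | ∃ g ∈ G, ∃ a ∈ alternatingGroup Ω,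
      (∀ x ∉ A, a x = x) ∧ k = g⁻¹ * a * g} with hH
  have hpA : p ∈ A := hp.1
  have hqA : q ∈ A := hq.1
  have hpω : p ≠ ω := hp.2
  have hqω : q ≠ ω := hq.2
  have hωAB : ω ∈ A ∩ B := by rw [hI]; exact rfl
  have hωA : ω ∈ A := hωAB.1
  have hωB : ω ∈ B := hωAB.2
  -- the basic generators : 3-cycles (p q x)
  have hT : ∀ x, x ≠ p → x ≠ q → c3 p q x ∈ H := by
    intro x hxp hxq
    by_cases hxA : x ∈ A
    · apply Subgroup.subset_closure
      refine ⟨1, one_mem G, c3 p q x, c3_mem_alt _ _ _ hpq (Ne.symm hxq), ?_, by group⟩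
      intro y hyA
      exact c3_other _ _ _ _ (fun h => hyA (h ▸ hpA)) (fun h => hyA (h ▸ hqA))
        (fun h => hyA (h ▸ hxA))
    · have hxB : x ∈ B := by
        have hx : x ∈ A ∪ B := hU.symm ▸ Set.mem_univ x
        exact hx.resolve_left hxA
      obtain ⟨g, hg, hgx⟩ := htrans x hxB ω hωB
      obtain ⟨hgp, hgq⟩ := hfix g hg
      apply Subgroup.subset_closure
      refine ⟨g, hg, g * c3 p q x * g⁻¹, ?_, ?_, by group⟩
      · rw [c3_conj, hgp, hgq, hgx]
        exact c3_mem_alt _ _ _ hpq hqω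
      · intro y hyA
        rw [c3_conj, hgp, hgq, hgx]
        exact c3_other _ _ _ _ (fun h => hyA (h ▸ hpA)) (fun h => hyA (h ▸ hqA))
          (fun h => hyA (h ▸ hωA))
  -- 3-cycles (q a b) with a,b outside {p,q}
  have h2 : ∀ a b, a ≠ b → a ≠ p → a ≠ q → b ≠ p → b ≠ q → c3 q a b ∈ H := by
    intro a b hab hap haq hbp hbq
    have e : c3 p q a * c3 p q b * (c3 p q a)⁻¹ = c3 q a b := by
      rw [c3_conj, c3_fst p q a hpq (Ne.symm hap), c3_snd p q a hap haq,
        c3_other p q a b hbp hbq (Ne.symm hab)]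
    exact e ▸ mul_mem (mul_mem (hT a hap haq) (hT b hbp hbq)) (inv_mem (hT a hap haq))
  -- 3-cycles (p a b) with a,b outside {p,q}
  have h3 : ∀ a b, a ≠ b → a ≠ p → a ≠ q → b ≠ p → b ≠ q → c3 p a b ∈ H := by
    intro a b hab hap haq hbp hbq
    have e : c3 p q b * c3 q b a * (c3 p q b)⁻¹ = c3 p a b := by
      rw [c3_conj, c3_snd p q b hbp hbq, c3_trd,
        c3_other p q b a hap haq hab,
        c3_rot b p a hbp (Ne.symm hap) hab]
    exact e ▸ mul_mem (mul_mem (hT b hbp hbq) (h2 b a (Ne.symm hab) hbp hbq hap haq))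
      (inv_mem (hT b hbp hbq))
  -- 3-cycles avoiding p and q
  have h4 : ∀ u a b, u ≠ a → a ≠ b → b ≠ u → u ≠ p → u ≠ q → a ≠ p → a ≠ q →
      b ≠ p → b ≠ q → c3 u a b ∈ H := by
    intro u a b hua hab hbu hup huq hap haq hbp hbq
    have e : c3 p q u * c3 q a b * (c3 p q u)⁻¹ = c3 u a b := by
      rw [c3_conj, c3_snd p q u hup huq, c3_other p q u a hap haq (Ne.symm hua),
        c3_other p q u b hbp hbq hbu]
    exact e ▸ mul_mem (mul_mem (hT u hup huq) (h2 a b hab hap haq hbp hbq))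
      (inv_mem (hT u hup huq))
  -- all 3-cycles starting with p
  have keyP : ∀ y z, p ≠ y → y ≠ z → z ≠ p → c3 p y z ∈ H := by
    intro y z hpy hyz hzp
    by_cases hqy : q = y
    · subst hqy
      exact hT z hzp (Ne.symm hyz)
    by_cases hqz : q = z
    · subst hqz
      have e : (c3 p q y)⁻¹ = c3 p y q := by
        rw [c3_inv, c3_rot y q p (fun h => hqy h.symm) hzp hpy,
          c3_rot q p y hzp hpy (fun h => hqy h.symm)]
      exact e ▸ inv_mem (hT y (Ne.symm hpy) (fun h => hqy h.symm))
    · exact h3 y z hyz (Ne.symm hpy) (fun h => hqy h.symm) hzp (fun h => hqz h.symm)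
  -- all 3-cycles
  have key : ∀ x y z, x ≠ y → y ≠ z → z ≠ x → c3 x y z ∈ H := by
    intro x y z hxy hyz hzx
    by_cases hpx : p = x
    · subst hpx; exact keyP y z hxy hyz hzx
    by_cases hpy : p = y
    · subst hpy
      rw [c3_rot x p z hxy hyz hzx]
      exact keyP z x hyz hzx hxy
    by_cases hpz : p = z
    · subst hpz
      rw [c3_rot x y p hxy hyz hzx, c3_rot y p x hyz hzx hxy]
      exact keyP x y hzx hxy hyz
    by_cases hqx : q = x
    · subst hqx
      exact h2 y z hyz (fun h => hpy h.symm) (Ne.symm hxy) (fun h => hpz h.symm) hzx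
    by_cases hqy : q = y
    · subst hqy
      rw [c3_rot x q z hxy hyz hzx]
      exact h2 z x hzx (fun h => hpz h.symm) (Ne.symm hyz) (fun h => hpx h.symm) hxy
    by_cases hqz : q = z
    · subst hqz
      rw [c3_rot x y q hxy hyz hzx, c3_rot y q x hyz hzx hxy]
      exact h2 x y hxy (fun h => hpx h.symm) (Ne.symm hzx) (fun h => hpy h.symm) hyz
    · exact h4 x y z hxy hyz hzx (fun h => hpx h.symm) (fun h => hqx h.symm)
        (fun h => hpy h.symm) (fun h => hqy h.symm) (fun h => hpz h.symm)
        (fun h => hqz h.symm)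
  apply le_antisymm
  · rw [hH, Subgroup.closure_le]
    rintro k ⟨g, hg, a, haAlt, -, rfl⟩
    exact mul_mem (mul_mem (inv_mem (hG hg)) haAlt) (hG hg)
  · rw [← Equiv.Perm.closure_three_cycles_eq_alternating, Subgroup.closure_le]
    intro σ hσ
    obtain ⟨a, b, c, hab, hbc, hca, rfl⟩ := isThreeCycle_decomp hσ
    exact key a b c hab hbc hca
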